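/- Let α be a nonnegative random variable representable as α = ∑_{j=0}^{2N}(T_{j+1} − T_j) where N is a nonnegative integer random variable with P(N > n) ≤ e^{−Cn}, and each increment satisfies P(T_{j+1} − T_j > t) ≤ C₁·exp(−C₂·t^{1/5}) for t ≥ t*. Then there exist constants C', C'' > 0 and t₁ > 0 such that for all t ≥ t₁, P(α > t) ≤ C'·exp(−C''·t^{1/6}). -/

import Mathlib

/-!
Split according to whether `N ≤ n`. On that event `α` is a sum of at most `2n + 1`
nonnegative increments, so `α > t` forces one of the first `2n + 1` increments to exceed
`t / (2n + 1)`. The union bound gives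
`P(α > t) ≤ e^{-Cn} + (2n+1) C₁ exp(-C₂ (t / (2n+1))^{1/5})`, and the choice
`n = ⌊t^{1/6}⌋` makes both exponents of order `t^{1/6}`; the factor `2n + 1` is absorbed
by halving the rate.
-/

open MeasureTheory Real Finset

theorem Finset.sum_range_le_mul_of_le {X : ℕ → ℝ} (hX : ∀ j, 0 ≤ X j) {m k : ℕ}
    (hmk : m ≤ k) {s : ℝ} (hs : ∀ j < k, X j ≤ s) : ∑ j ∈ range m, X j ≤ k * s :=
  calc ∑ j ∈ range m, X j ≤ ∑ j ∈ range k, X j :=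
        sum_le_sum_of_subset_of_nonneg (range_subset_range.mpr hmk) fun j _ _ => hX j
    _ ≤ ∑ _j ∈ range k, s := sum_le_sum fun j hj => hs j (mem_range.mp hj)
    _ = k * s := by rw [sum_const, card_range, nsmul_eq_mul]

theorem MeasureTheory.measure_lt_sum_range_le {Ω : Type*} [MeasurableSpace Ω] (μ : Measure Ω)
    {X : ℕ → Ω → ℝ} (hX : ∀ j ω, 0 ≤ X j ω) (m : Ω → ℕ) (k : ℕ) {s t : ℝ}
    (hst : k * s ≤ t) :
    μ {ω | t < ∑ j ∈ range (m ω), X j ω} ≤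
      μ {ω | k < m ω} + ∑ j ∈ range k, μ {ω | s < X j ω} := by
  have hsub : {ω | t < ∑ j ∈ range (m ω), X j ω} ⊆
      {ω | k < m ω} ∪ ⋃ j ∈ range k, {ω | s < X j ω} := by
    intro ω hω
    contrapose! hω
    simp only [Set.mem_union, Set.mem_ofPred_eq, Set.mem_iUnion, mem_range, not_or, not_exists,
      not_lt] at hω ⊢
    exact (sum_range_le_mul_of_le (hX · ω) hω.1 hω.2).trans hst
  calc μ {ω | t < ∑ j ∈ range (m ω), X j ω}
      ≤ μ {ω | k < m ω} + μ (⋃ j ∈ range k, {ω | s < X j ω}) :=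
        (measure_mono hsub).trans (measure_union_le _ _)
    _ ≤ μ {ω | k < m ω} + ∑ j ∈ range k, μ {ω | s < X j ω} := by
        gcongr; exact measure_biUnion_finset_le _ _

theorem Real.exp_neg_mul_floor_le {C : ℝ} (hC : 0 ≤ C) (x : ℝ) :
    exp (-(C * ⌊x⌋₊)) ≤ exp C * exp (-(C * x)) := by
  rw [← exp_add, exp_le_exp]
  nlinarith [Nat.lt_floor_add_one x]

theorem Real.mul_exp_neg_two_mul_le {a : ℝ} (ha : 0 < a) (x : ℝ) :
    x * exp (-(2 * a * x)) ≤ exp (-(a * x)) / a := by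
  have hax : a * x ≤ exp (a * x) := by linarith [add_one_le_exp (a * x)]
  rw [le_div_iff₀ ha]
  have hsplit : exp (-(2 * a * x)) = exp (-(a * x)) * exp (-(a * x)) := by
    rw [← exp_add]; ring_nf
  calc x * exp (-(2 * a * x)) * a = a * x * exp (-(a * x)) * exp (-(a * x)) := by
        rw [hsplit]; ring
    _ ≤ exp (a * x) * exp (-(a * x)) * exp (-(a * x)) := by gcongr
    _ = exp (-(a * x)) := by rw [← exp_add, add_neg_cancel, exp_zero, one_mul]

theorem Real.add_mul_exp_neg_le {A B a b x : ℝ} (hA : 0 ≤ A) (hB : 0 ≤ B) (hx : 0 ≤ x) :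
    A * exp (-(a * x)) + B * exp (-(b * x)) ≤ (A + B) * exp (-(min a b * x)) := by
  have ha : exp (-(a * x)) ≤ exp (-(min a b * x)) := by gcongr; exact min_le_left a b
  have hb : exp (-(b * x)) ≤ exp (-(min a b * x)) := by gcongr; exact min_le_right a b
  nlinarith

theorem Real.le_rpow_inv_of_pow_le {a s : ℝ} (ha : 0 ≤ a) {n : ℕ} (hn : n ≠ 0)
    (h : a ^ n ≤ s) : a ≤ s ^ (n⁻¹ : ℝ) :=
  pow_rpow_inv_natCast ha hn ▸ rpow_le_rpow (by positivity) h (by positivity)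

theorem Nat.two_mul_floor_add_one_le {x : ℝ} (hx : 1 ≤ x) : (2 * ⌊x⌋₊ + 1 : ℝ) ≤ 3 * x := by
  linarith [Nat.floor_le (by linarith : 0 ≤ x)]

theorem Real.div_three_pow_five_le_pow_six_div {x : ℝ} (hx : 1 ≤ x) :
    (x / 3) ^ 5 ≤ x ^ 6 / (2 * ⌊x⌋₊ + 1) := by
  have hfloor := Nat.two_mul_floor_add_one_le hx
  rw [le_div_iff₀ (by positivity)]
  nlinarith [pow_le_pow_left₀ (by norm_num : (0 : ℝ) ≤ 1) hx 5]

theorem Real.exp_neg_floor_add_mul_exp_neg_le {C C₁ C₂ x s : ℝ} (hC : 0 < C) (hC₁ : 0 < C₁)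
    (hC₂ : 0 < C₂) (hx : 1 ≤ x) (hs : (x / 3) ^ 5 ≤ s) :
    exp (-(C * ⌊x⌋₊)) + (2 * ⌊x⌋₊ + 1) * (C₁ * exp (-(C₂ * s ^ ((1 : ℝ) / 5)))) ≤
      (exp C + 18 * C₁ / C₂) * exp (-(min C (C₂ / 6) * x)) := by
  have hroot : x / 3 ≤ s ^ ((1 : ℝ) / 5) := by
    have := le_rpow_inv_of_pow_le (by positivity) (by norm_num : 5 ≠ 0) hs
    rwa [one_div, ← Nat.cast_ofNat]
  have hfloor := Nat.two_mul_floor_add_one_le hx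
  have hexp : exp (-(C₂ * s ^ ((1 : ℝ) / 5))) ≤ exp (-(2 * (C₂ / 6) * x)) :=
    exp_le_exp.mpr (neg_le_neg (by nlinarith))
  have hincr : (2 * ⌊x⌋₊ + 1) * (C₁ * exp (-(C₂ * s ^ ((1 : ℝ) / 5)))) ≤
      18 * C₁ / C₂ * exp (-(C₂ / 6 * x)) :=
    calc (2 * ⌊x⌋₊ + 1) * (C₁ * exp (-(C₂ * s ^ ((1 : ℝ) / 5))))
        ≤ 3 * x * (C₁ * exp (-(2 * (C₂ / 6) * x))) := by gcongr
      _ = 3 * C₁ * (x * exp (-(2 * (C₂ / 6) * x))) := by ring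
      _ ≤ 3 * C₁ * (exp (-(C₂ / 6 * x)) / (C₂ / 6)) := by
          gcongr; exact mul_exp_neg_two_mul_le (by positivity) x
      _ = 18 * C₁ / C₂ * exp (-(C₂ / 6 * x)) := by field_simp; ring
  calc _ ≤ exp C * exp (-(C * x)) + 18 * C₁ / C₂ * exp (-(C₂ / 6 * x)) :=
        add_le_add (exp_neg_mul_floor_le hC.le x) hincr
    _ ≤ _ := add_mul_exp_neg_le (exp_pos C).le (by positivity) (by linarith)

theorem stmt15_general {Ω : Type*} [MeasurableSpace Ω] (μ : Measure Ω)
    (T : ℕ → Ω → ℝ) (N : Ω → ℕ)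
    (hmono : ∀ j ω, T j ω ≤ T (j + 1) ω)
    (C C₁ C₂ tstar : ℝ) (hC : 0 < C) (hC₁ : 0 < C₁) (hC₂ : 0 < C₂)
    (hN : ∀ n : ℕ, μ {ω | n < N ω} ≤ ENNReal.ofReal (Real.exp (-(C * n))))
    (hT : ∀ j : ℕ, ∀ t : ℝ, tstar ≤ t →
      μ {ω | t < T (j + 1) ω - T j ω} ≤
        ENNReal.ofReal (C₁ * Real.exp (-(C₂ * t ^ ((1:ℝ)/5))))) :
    ∃ C' C'' t₁ : ℝ, 0 < C' ∧ 0 < C'' ∧ 0 < t₁ ∧ ∀ t : ℝ, t₁ ≤ t →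
      μ {ω | t < ∑ j ∈ Finset.range (2 * N ω + 1), (T (j + 1) ω - T j ω)} ≤
        ENNReal.ofReal (C' * Real.exp (-(C'' * t ^ ((1:ℝ)/6)))) := by
  refine ⟨exp C + 18 * C₁ / C₂, min C (C₂ / 6), (3 * max 1 tstar) ^ 6, by positivity,
    lt_min hC (by positivity), by positivity, fun t ht => ?_⟩
  have ht0 : 0 ≤ t := le_trans (by positivity) ht
  set x := t ^ ((1 : ℝ) / 6)
  have hxt : x ^ 6 = t := by
    simpa only [x, one_div, Nat.cast_ofNat] using rpow_inv_natCast_pow ht0 (n := 6) (by norm_num)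
  have hx : 3 * max 1 tstar ≤ x := by
    simpa only [x, one_div, Nat.cast_ofNat] using
      le_rpow_inv_of_pow_le (by positivity) (n := 6) (by norm_num) ht
  have hx1 : 1 ≤ x := by linarith [le_max_left 1 tstar]
  set n := ⌊x⌋₊
  set s := t / (2 * n + 1)
  have hs : (x / 3) ^ 5 ≤ s := by simpa only [s, hxt] using div_three_pow_five_le_pow_six_div hx1
  have hts : tstar ≤ s := calc
    tstar ≤ x / 3 := by linarith [le_max_right 1 tstar]
    _ ≤ (x / 3) ^ 5 := le_self_pow₀ (by linarith [le_max_left 1 tstar]) (by norm_num)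
    _ ≤ s := hs
  have hevent : {ω | 2 * n + 1 < 2 * N ω + 1} = {ω | n < N ω} := by ext; simp
  calc _ ≤ μ {ω | 2 * n + 1 < 2 * N ω + 1} +
          ∑ j ∈ range (2 * n + 1), μ {ω | s < T (j + 1) ω - T j ω} :=
        measure_lt_sum_range_le μ (fun j ω => sub_nonneg.mpr (hmono j ω)) _ _
          (by push_cast; rw [mul_div_cancel₀ _ (by positivity)])
    _ ≤ ENNReal.ofReal (exp (-(C * n))) +
          ∑ _j ∈ range (2 * n + 1), ENNReal.ofReal (C₁ * exp (-(C₂ * s ^ ((1 : ℝ) / 5)))) :=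
        add_le_add (hevent ▸ hN n) (sum_le_sum fun j _ => hT j s hts)
    _ = ENNReal.ofReal
          (exp (-(C * n)) + (2 * n + 1) * (C₁ * exp (-(C₂ * s ^ ((1 : ℝ) / 5))))) := by
        rw [sum_const, card_range, nsmul_eq_mul,
          ENNReal.ofReal_add (by positivity) (by positivity),
          ENNReal.ofReal_mul (by positivity : (0 : ℝ) ≤ 2 * n + 1)]
        norm_cast
    _ ≤ _ := ENNReal.ofReal_le_ofReal (exp_neg_floor_add_mul_exp_neg_le hC hC₁ hC₂ hx1 hs)

/-- If α = ∑_{j=0}^{2N} (T_{j+1} − T_j) where P(N > n) ≤ e^{−Cn} and each increment has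
stretched-exponential tail with exponent 1/5, then α has a stretched-exponential tail with
exponent 1/6. -/
theorem stmt15 {Ω : Type*} [MeasurableSpace Ω] (μ : Measure Ω) [IsProbabilityMeasure μ]
    (T : ℕ → Ω → ℝ) (N : Ω → ℕ)
    (hmono : ∀ j ω, T j ω ≤ T (j + 1) ω)
    (C C₁ C₂ tstar : ℝ) (hC : 0 < C) (hC₁ : 0 < C₁) (hC₂ : 0 < C₂) (htstar : 0 < tstar)
    (hN : ∀ n : ℕ, μ {ω | n < N ω} ≤ ENNReal.ofReal (Real.exp (-(C * n))))
    (hT : ∀ j : ℕ, ∀ t : ℝ, tstar ≤ t →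
      μ {ω | t < T (j + 1) ω - T j ω} ≤
        ENNReal.ofReal (C₁ * Real.exp (-(C₂ * t ^ ((1:ℝ)/5))))) :
    ∃ C' C'' t₁ : ℝ, 0 < C' ∧ 0 < C'' ∧ 0 < t₁ ∧ ∀ t : ℝ, t₁ ≤ t →
      μ {ω | t < ∑ j ∈ Finset.range (2 * N ω + 1), (T (j + 1) ω - T j ω)} ≤
        ENNReal.ofReal (C' * Real.exp (-(C'' * t ^ ((1:ℝ)/6)))) :=
  stmt15_general μ T N hmono C C₁ C₂ tstar hC hC₁ hC₂ hN hT
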